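/- The set of weakly feasible solutions of the interval transportation problem equals the union ⋃ { F(s,d) : s ∈ [s̲,s̄], d ∈ [d̲,d̄] } and this union equals ⋃ { F(s̄,d) : d ∈ [d̲,d̄] }, i.e., it is determined by the upper supply bound s̄. -/

import Mathlib

open Finset

def Feas {m n : ℕ} (s : Fin m → ℝ) (d : Fin n → ℝ) (x : Fin m → Fin n → ℝ) : Prop :=
  (∀ i j, 0 ≤ x i j) ∧ (∀ i, ∑ j, x i j ≤ s i) ∧ (∀ j, ∑ i, x i j = d j)

def IsOptimal {m n : ℕ} (c : Fin m → Fin n → ℝ) (s : Fin m → ℝ) (d : Fin n → ℝ)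
    (x : Fin m → Fin n → ℝ) : Prop :=
  Feas s d x ∧ ∀ x', Feas s d x' → ∑ i, ∑ j, c i j * x i j ≤ ∑ i, ∑ j, c i j * x' i j

theorem Feas.mono_supply {m n : ℕ} {s s' : Fin m → ℝ} {d : Fin n → ℝ} {x : Fin m → Fin n → ℝ}
    (hx : Feas s d x) (hss' : s ≤ s') : Feas s' d x :=
  ⟨hx.1, fun i => (hx.2.1 i).trans (hss' i), hx.2.2⟩

theorem stmt_18_general {m n : ℕ} (slo shi : Fin m → ℝ) (dlo dhi : Fin n → ℝ)
    (hs : slo ≤ shi) :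
    {x : Fin m → Fin n → ℝ | ∃ s d, slo ≤ s ∧ s ≤ shi ∧ dlo ≤ d ∧ d ≤ dhi ∧ Feas s d x} =
      {x : Fin m → Fin n → ℝ | ∃ d, dlo ≤ d ∧ d ≤ dhi ∧ Feas shi d x} := by
  ext x
  constructor
  · rintro ⟨s, d, -, hs_shi, hdlo, hdhi, hx⟩
    exact ⟨d, hdlo, hdhi, hx.mono_supply hs_shi⟩
  · rintro ⟨d, hdlo, hdhi, hx⟩
    exact ⟨shi, d, hs, le_rfl, hdlo, hdhi, hx⟩

theorem stmt_18 {m n : ℕ} (slo shi : Fin m → ℝ) (dlo dhi : Fin n → ℝ)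
    (hs : slo ≤ shi) (hd : dlo ≤ dhi) :
    {x : Fin m → Fin n → ℝ | ∃ s d, slo ≤ s ∧ s ≤ shi ∧ dlo ≤ d ∧ d ≤ dhi ∧ Feas s d x} =
      {x : Fin m → Fin n → ℝ | ∃ d, dlo ≤ d ∧ d ≤ dhi ∧ Feas shi d x} :=
  stmt_18_general slo shi dlo dhi hs
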